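/- arXiv:2311.07039 — 3 statements merged into one kernel-verified Lean document; each statement's English description precedes it below -/
import Mathlib

section
/- Let n ≥ 1, M_0 > 0 and M_1, …, M_n > 0 (possibly +∞). Let x_1, …, x_n : [0, T] → ℝ be continuous and u : [0, T] → ℝ satisfy the chain-of-integrators dynamics on (0, T), with |u(t)| ≤ M_0 and |x_k(t)| ≤ M_k for all t and all k. Suppose x_n is constant on [t_1, t_2] ⊆ [0, T] with t_1 < t_2, and set Δ = t_2 − t_1. Then there exist continuous y_1, …, y_n : [0, T − Δ] → ℝ and v : [0, T − Δ] → ℝ satisfying the chain-of-integrators dynamics at all but at most one time in (0, T − Δ), with |v(t)| ≤ M_0 and |y_k(t)| ≤ M_k for all t and k, such that y_k(0) = x_k(0) and y_k(T − Δ) = x_k(T) for all k. Consequently, a trajectory whose top state x_n is constant on a nondegenerate interval is not time-optimal: the same endpoints can be joined in strictly shorter time under the same constraints. -/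
/-!
If `x n` is constant on `[t₁, t₂]`, then each lower state `x k`, being the derivative of `x (k + 1)`,
vanishes on `(t₁, t₂)`, so by continuity every state takes the same value at `t₁` and at `t₂`.
Cutting `(t₁, t₂)` out of the time axis and shifting the tail back by `t₂ - t₁` therefore glues
the trajectory continuously; the glued trajectory obeys the dynamics away from `t₁`, takes only
values of the original one, and joins the same endpoints in time `T - (t₂ - t₁)`.
-/

open Set Filter Topology

theorem HasDerivAt.eq_zero_of_eqOn_const {𝕜 F : Type*} [NontriviallyNormedField 𝕜]
    [NormedAddCommGroup F] [NormedSpace 𝕜 F] {f : 𝕜 → F} {f' c : F} {s : Set 𝕜} {t : 𝕜}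
    (hf : HasDerivAt f f' t) (hs : IsOpen s) (hfc : EqOn f (fun _ => c) s) (ht : t ∈ s) :
    f' = 0 :=
  hf.unique <|
    (hasDerivAt_const t c).congr_of_eventuallyEq (eventuallyEq_of_mem (hs.mem_nhds ht) hfc)

theorem ContinuousOn.apply_eq_of_eqOn_const_Ioo {α β : Type*} [LinearOrder α] [TopologicalSpace α]
    [OrderTopology α] [DenselyOrdered α] [TopologicalSpace β] [T2Space β] {f : α → β} {a b : α}
    {c : β} (hab : a < b) (hf : ContinuousOn f (Icc a b)) (hfc : EqOn f (fun _ => c) (Ioo a b)) :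
    f a = f b := by
  have hfc' :=
    hfc.of_subset_closure hf continuousOn_const Ioo_subset_Icc_self (closure_Ioo hab.ne).ge
  exact (hfc' (left_mem_Icc.2 hab.le)).trans (hfc' (right_mem_Icc.2 hab.le)).symm

theorem exists_eqOn_const_of_chain_top_eqOn_const {E : Type*} [NormedAddCommGroup E]
    [NormedSpace ℝ E] {x : ℕ → ℝ → E} {n : ℕ} {s : Set ℝ} (hs : IsOpen s)
    (hx : ∀ k, 1 ≤ k → k < n → ∀ t ∈ s, HasDerivAt (x (k + 1)) (x k t) t)
    {c : E} (hc : EqOn (x n) (fun _ => c) s) {k : ℕ} (hk : 1 ≤ k) (hkn : k ≤ n) :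
    ∃ c' : E, EqOn (x k) (fun _ => c') s := by
  induction hkn using Nat.decreasingInduction with
  | self => exact ⟨c, hc⟩
  | of_succ k hkn ih =>
    obtain ⟨c', hc'⟩ := ih (by omega)
    exact ⟨0, fun t ht => (hx k hk hkn t ht).eq_zero_of_eqOn_const hs hc' ht⟩

section Excise

variable {E : Type*} {f g : ℝ → E} {a b t T : ℝ}

noncomputable def excise (f : ℝ → E) (a b : ℝ) (t : ℝ) : E :=
  if t ≤ a then f t else f (t + (b - a))

theorem excise_of_le (h : t ≤ a) : excise f a b t = f t := if_pos h

theorem excise_of_lt (h : a < t) : excise f a b t = f (t + (b - a)) := if_neg h.not_ge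

theorem excise_eventuallyEq_of_lt (h : t < a) : excise f a b =ᶠ[𝓝 t] f := by
  filter_upwards [Iio_mem_nhds h] with s hs using excise_of_le (le_of_lt hs)

theorem excise_eventuallyEq_of_gt (h : a < t) :
    excise f a b =ᶠ[𝓝 t] fun s => f (s + (b - a)) := by
  filter_upwards [Ioi_mem_nhds h] with s hs using excise_of_lt hs

theorem image_excise_subset (h0 : 0 ≤ a) (hab : a ≤ b) (hbT : b ≤ T) :
    excise f a b '' Icc 0 (T - (b - a)) ⊆ f '' Icc 0 T := by
  rintro _ ⟨t, ht, rfl⟩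
  rcases le_or_gt t a with hta | hat
  · exact ⟨t, ⟨ht.1, by linarith⟩, (excise_of_le hta).symm⟩
  · exact ⟨t + (b - a), ⟨by linarith [ht.1], by linarith [ht.2]⟩, (excise_of_lt hat).symm⟩

theorem excise_sub_eq (hfab : f a = f b) (haT : a ≤ T - (b - a)) :
    excise f a b (T - (b - a)) = f T := by
  rcases haT.eq_or_lt with heq | hlt
  · rw [excise_of_le heq.ge, ← heq, hfab]
    congr 1
    linarith
  · rw [excise_of_lt hlt, sub_add_cancel]

theorem continuousOn_excise [TopologicalSpace E] (hf : ContinuousOn f (Icc 0 T)) (hfab : f a = f b)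
    (hab : a ≤ b) (hbT : b ≤ T) : ContinuousOn (excise f a b) (Icc 0 (T - (b - a))) := by
  refine ContinuousOn.if ?_ ?_ ?_
  · rintro s ⟨-, hs⟩
    rw [show {s : ℝ | s ≤ a} = Iic a from rfl, frontier_Iic, mem_singleton_iff] at hs
    rw [hs, add_sub_cancel, hfab]
  · refine hf.mono fun s ⟨hs, hsa⟩ => ⟨hs.1, ?_⟩
    rw [show {s : ℝ | s ≤ a} = Iic a from rfl, closure_Iic] at hsa
    exact hsa.trans (hab.trans hbT)
  · refine hf.comp (continuous_add_const (b - a)).continuousOn fun s ⟨hs, _⟩ => ?_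
    exact ⟨by linarith [hs.1], by linarith [hs.2]⟩

theorem hasDerivAt_excise [NormedAddCommGroup E] [NormedSpace ℝ E]
    (hf : ∀ s ∈ Ioo 0 T, HasDerivAt f (g s) s) (hab : a ≤ b) (hbT : b ≤ T)
    (ht : t ∈ Ioo 0 (T - (b - a))) (hta : t ≠ a) :
    HasDerivAt (excise f a b) (excise g a b t) t := by
  rcases hta.lt_or_gt with hlt | hgt
  · rw [excise_of_le hlt.le]
    exact (hf t ⟨ht.1, by linarith⟩).congr_of_eventuallyEq (excise_eventuallyEq_of_lt hlt)
  · rw [excise_of_lt hgt]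
    have hshift := (hf (t + (b - a)) ⟨by linarith [ht.1], by linarith [ht.2]⟩).comp_add_const
    exact hshift.congr_of_eventuallyEq (excise_eventuallyEq_of_gt hgt)

end Excise

theorem constant_top_state_not_time_optimal_general
    (n : ℕ) (M0 : ℝ)
    (M : ℕ → EReal)
    (T : ℝ) (x : ℕ → ℝ → ℝ) (u : ℝ → ℝ)
    (hxc : ∀ k, 1 ≤ k → k ≤ n → ContinuousOn (x k) (Set.Icc 0 T))
    (hx1 : ∀ t ∈ Set.Ioo 0 T, HasDerivAt (x 1) (u t) t)
    (hxk : ∀ k, 1 ≤ k → k < n → ∀ t ∈ Set.Ioo 0 T, HasDerivAt (x (k + 1)) (x k t) t)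
    (hu : ∀ t ∈ Set.Icc 0 T, |u t| ≤ M0)
    (hxb : ∀ k, 1 ≤ k → k ≤ n → ∀ t ∈ Set.Icc 0 T, ((|x k t| : ℝ) : EReal) ≤ M k)
    (t1 t2 : ℝ) (h12 : t1 < t2) (hsub : Set.Icc t1 t2 ⊆ Set.Icc 0 T)
    (c : ℝ) (hconst : ∀ t ∈ Set.Icc t1 t2, x n t = c) :
    ∃ (y : ℕ → ℝ → ℝ) (v : ℝ → ℝ) (t0 : ℝ),
      (∀ k, 1 ≤ k → k ≤ n → ContinuousOn (y k) (Set.Icc 0 (T - (t2 - t1)))) ∧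
      (∀ t ∈ Set.Ioo 0 (T - (t2 - t1)), t ≠ t0 → HasDerivAt (y 1) (v t) t) ∧
      (∀ k, 1 ≤ k → k < n → ∀ t ∈ Set.Ioo 0 (T - (t2 - t1)), t ≠ t0 →
        HasDerivAt (y (k + 1)) (y k t) t) ∧
      (∀ t ∈ Set.Icc 0 (T - (t2 - t1)), |v t| ≤ M0) ∧
      (∀ k, 1 ≤ k → k ≤ n → ∀ t ∈ Set.Icc 0 (T - (t2 - t1)), ((|y k t| : ℝ) : EReal) ≤ M k) ∧
      (∀ k, 1 ≤ k → k ≤ n → y k 0 = x k 0 ∧ y k (T - (t2 - t1)) = x k T) := by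
  obtain ⟨h0, -⟩ := hsub (left_mem_Icc.2 h12.le)
  obtain ⟨-, hT⟩ := hsub (right_mem_Icc.2 h12.le)
  have hIoo : Ioo t1 t2 ⊆ Ioo 0 T := fun t ht => ⟨h0.trans_lt ht.1, ht.2.trans_le hT⟩
  have hmatch : ∀ k, 1 ≤ k → k ≤ n → x k t1 = x k t2 := fun k hk hkn => by
    obtain ⟨c', hc'⟩ := exists_eqOn_const_of_chain_top_eqOn_const isOpen_Ioo
      (fun k hk hkn t ht => hxk k hk hkn t (hIoo ht))
      (fun t ht => hconst t (Ioo_subset_Icc_self ht)) hk hkn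
    exact ((hxc k hk hkn).mono hsub).apply_eq_of_eqOn_const_Ioo h12 hc'
  have hrange {f : ℝ → ℝ} {t : ℝ} (ht : t ∈ Icc 0 (T - (t2 - t1))) :
      ∃ s ∈ Icc 0 T, f s = excise f t1 t2 t :=
    image_excise_subset h0 h12.le hT (mem_image_of_mem _ ht)
  refine ⟨fun k => excise (x k) t1 t2, excise u t1 t2, t1,
    fun k hk hkn => continuousOn_excise (hxc k hk hkn) (hmatch k hk hkn) h12.le hT,
    fun t ht hne => hasDerivAt_excise hx1 h12.le hT ht hne,
    fun k hk hkn t ht hne => hasDerivAt_excise (hxk k hk hkn) h12.le hT ht hne, ?_, ?_,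
    fun k hk hkn => ⟨excise_of_le h0, excise_sub_eq (hmatch k hk hkn) (by linarith)⟩⟩
  · intro t ht
    obtain ⟨s, hs, hst⟩ := hrange (f := u) ht
    simpa only [← hst] using hu s hs
  · intro k hk hkn t ht
    obtain ⟨s, hs, hst⟩ := hrange (f := x k) ht
    simpa only [← hst] using hxb k hk hkn s hs

/-- a trajectory whose top state `x n` is constant on a nondegenerate
interval is not time-optimal: the same endpoints can be joined in strictly shorter
time (time `T - (t₂ - t₁)`) under the same input and state constraints, by a
trajectory satisfying the dynamics at all but at most one time. -/
theorem constant_top_state_not_time_optimal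
    (n : ℕ) (hn : 1 ≤ n) (M0 : ℝ) (hM0 : 0 < M0)
    (M : ℕ → EReal) (hM : ∀ k, 1 ≤ k → k ≤ n → (0 : EReal) < M k)
    (T : ℝ) (x : ℕ → ℝ → ℝ) (u : ℝ → ℝ)
    (hxc : ∀ k, 1 ≤ k → k ≤ n → ContinuousOn (x k) (Set.Icc 0 T))
    (hx1 : ∀ t ∈ Set.Ioo 0 T, HasDerivAt (x 1) (u t) t)
    (hxk : ∀ k, 1 ≤ k → k < n → ∀ t ∈ Set.Ioo 0 T, HasDerivAt (x (k + 1)) (x k t) t)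
    (hu : ∀ t ∈ Set.Icc 0 T, |u t| ≤ M0)
    (hxb : ∀ k, 1 ≤ k → k ≤ n → ∀ t ∈ Set.Icc 0 T, ((|x k t| : ℝ) : EReal) ≤ M k)
    (t1 t2 : ℝ) (h12 : t1 < t2) (hsub : Set.Icc t1 t2 ⊆ Set.Icc 0 T)
    (c : ℝ) (hconst : ∀ t ∈ Set.Icc t1 t2, x n t = c) :
    ∃ (y : ℕ → ℝ → ℝ) (v : ℝ → ℝ) (t0 : ℝ),
      (∀ k, 1 ≤ k → k ≤ n → ContinuousOn (y k) (Set.Icc 0 (T - (t2 - t1)))) ∧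
      (∀ t ∈ Set.Ioo 0 (T - (t2 - t1)), t ≠ t0 → HasDerivAt (y 1) (v t) t) ∧
      (∀ k, 1 ≤ k → k < n → ∀ t ∈ Set.Ioo 0 (T - (t2 - t1)), t ≠ t0 →
        HasDerivAt (y (k + 1)) (y k t) t) ∧
      (∀ t ∈ Set.Icc 0 (T - (t2 - t1)), |v t| ≤ M0) ∧
      (∀ k, 1 ≤ k → k ≤ n → ∀ t ∈ Set.Icc 0 (T - (t2 - t1)), ((|y k t| : ℝ) : EReal) ≤ M k) ∧
      (∀ k, 1 ≤ k → k ≤ n → y k 0 = x k 0 ∧ y k (T - (t2 - t1)) = x k T) :=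
  constant_top_state_not_time_optimal_general n M0 M T x u hxc hx1 hxk hu hxb t1 t2 h12 hsub c
    hconst
end

section
/- Let k ≥ 2, let a_1, …, a_{k−1}, u⁺, u⁻ ∈ ℝ, and let δ > 0. Define f⁺(t) = Σ_{i=1}^{k−1} a_i t^i / i! + u⁺ t^k / k! and f⁻(t) = Σ_{i=1}^{k−1} a_i (−1)^i t^i / i! + u⁻ (−1)^k t^k / k!. Suppose f⁺(t) < 0 and f⁻(t) < 0 for all t ∈ (0, δ). Then: (i) if the set {i : 1 ≤ i ≤ k − 1, a_i ≠ 0} is nonempty and m is its least element, then m is even and a_m < 0; (ii) if a_i = 0 for all 1 ≤ i ≤ k − 1, then u⁺ < 0 and (−1)^k u⁻ < 0. -/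
/-!
Write the one-sided expansion as `t ^ m * q t`, where `m` is the order of the lowest
nonvanishing coefficient: `q` is a polynomial with `q 0` equal to that coefficient, and it
is negative on `(0, δ)`, so by continuity the coefficient is `≤ 0`. Applied to `f⁺` this
gives `a m < 0`, as `a m ≠ 0`; applied to `f⁻`, whose coefficients are `(-1) ^ i a i`, it gives
`(-1) ^ m a m ≤ 0`, which forces `m` to be even. If all `a i` vanish, each expansion is a
single monomial and its sign is that of its coefficient.
-/

open Finset Filter Topology

lemma nonpos_of_forall_Ioo_neg {q : ℝ → ℝ} (hq : ContinuousWithinAt q (Set.Ioi 0) 0)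
    {δ : ℝ} (hδ : 0 < δ) (h : ∀ t ∈ Set.Ioo 0 δ, q t < 0) : q 0 ≤ 0 :=
  le_of_tendsto hq <| mem_of_superset (Ioo_mem_nhdsGT hδ) fun t ht => (h t ht).le

lemma sum_mul_pow_eq_pow_mul_sum {R : Type*} [CommSemiring R] {s : Finset ℕ} {c : ℕ → R}
    {m : ℕ} (hc : ∀ i ∈ s, i < m → c i = 0) (t : R) :
    ∑ i ∈ s, c i * t ^ i = t ^ m * ∑ i ∈ s, c i * t ^ (i - m) := by
  rw [mul_sum]
  refine sum_congr rfl fun i hi => ?_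
  rcases lt_or_ge i m with him | hmi
  · simp [hc i hi him]
  · rw [mul_left_comm, ← pow_add, Nat.add_sub_cancel' hmi]

lemma coeff_nonpos_of_sum_mul_pow_neg {s : Finset ℕ} {c : ℕ → ℝ} {m : ℕ} (hm : m ∈ s)
    (hc : ∀ i ∈ s, i < m → c i = 0) {δ : ℝ} (hδ : 0 < δ)
    (h : ∀ t ∈ Set.Ioo 0 δ, ∑ i ∈ s, c i * t ^ i < 0) : c m ≤ 0 := by
  set q : ℝ → ℝ := fun t => ∑ i ∈ s, c i * t ^ (i - m)
  have hq_neg : ∀ t ∈ Set.Ioo 0 δ, q t < 0 := fun t ht =>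
    neg_of_mul_neg_right ((sum_mul_pow_eq_pow_mul_sum hc t).symm.trans_lt (h t ht))
      (pow_pos ht.1 m).le
  have hq_zero : q 0 = c m := by
    refine (sum_eq_single m (fun i hi him => ?_) (absurd hm)).trans (by simp)
    rcases lt_or_gt_of_ne him with him | hmi
    · simp [hc i hi him]
    · simp [zero_pow (Nat.sub_ne_zero_of_lt hmi)]
  have hq_cont : Continuous q := by fun_prop
  exact hq_zero ▸ nonpos_of_forall_Ioo_neg hq_cont.continuousWithinAt hδ hq_neg

lemma taylor_sum_eq_sum_Icc (b : ℕ → ℝ) (u : ℝ) {k : ℕ} (hk : 1 ≤ k) (t : ℝ) :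
    ∑ i ∈ Icc 1 (k - 1), b i * t ^ i / (i.factorial : ℝ) + u * t ^ k / (k.factorial : ℝ) =
      ∑ i ∈ Icc 1 k, Function.update b k u i / (i.factorial : ℝ) * t ^ i := by
  obtain ⟨n, rfl⟩ := Nat.exists_eq_add_of_le' hk
  rw [Nat.add_sub_cancel, sum_Icc_succ_top (by omega), Function.update_self]
  congr 1
  · refine sum_congr rfl fun i hi => ?_
    rw [Function.update_of_ne (by grind)]
    ring
  · ring

lemma taylor_coeff_nonpos {k m : ℕ} {b : ℕ → ℝ} {u δ : ℝ} (hδ : 0 < δ)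
    (hm1 : 1 ≤ m) (hmk : m ≤ k - 1) (hb : ∀ i, 1 ≤ i → i < m → b i = 0)
    (h : ∀ t ∈ Set.Ioo 0 δ,
      ∑ i ∈ Icc 1 (k - 1), b i * t ^ i / (i.factorial : ℝ) +
        u * t ^ k / (k.factorial : ℝ) < 0) :
    b m ≤ 0 := by
  have hk : 1 ≤ k := by omega
  have hcoeff := coeff_nonpos_of_sum_mul_pow_neg (s := Icc 1 k) (m := m) (by grind)
    (fun i hi him => by
      rw [Function.update_of_ne (by omega), hb i (mem_Icc.1 hi).1 him, zero_div])
    hδ fun t ht => (taylor_sum_eq_sum_Icc b u hk t).symm.trans_lt (h t ht)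
  rwa [Function.update_of_ne (by omega), div_le_iff₀ (by positivity), zero_mul] at hcoeff

theorem isolated_touch_taylor_sign_analysis_general
    (k : ℕ) (a : ℕ → ℝ) (up um δ : ℝ) (hδ : 0 < δ)
    (hplus : ∀ t ∈ Set.Ioo (0:ℝ) δ,
      (∑ i ∈ Finset.Icc 1 (k - 1), a i * t ^ i / (Nat.factorial i : ℝ)) +
        up * t ^ k / (Nat.factorial k : ℝ) < 0)
    (hminus : ∀ t ∈ Set.Ioo (0:ℝ) δ,
      (∑ i ∈ Finset.Icc 1 (k - 1), a i * (-1 : ℝ) ^ i * t ^ i / (Nat.factorial i : ℝ)) +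
        um * (-1 : ℝ) ^ k * t ^ k / (Nat.factorial k : ℝ) < 0) :
    (∀ m, 1 ≤ m → m ≤ k - 1 → a m ≠ 0 → (∀ i, 1 ≤ i → i < m → a i = 0) →
      Even m ∧ a m < 0) ∧
    ((∀ i, 1 ≤ i → i ≤ k - 1 → a i = 0) → up < 0 ∧ (-1 : ℝ) ^ k * um < 0) := by
  refine ⟨fun m hm1 hmk ham hlow => ?_, fun hall => ?_⟩
  · have ham_neg : a m < 0 := (taylor_coeff_nonpos hδ hm1 hmk hlow hplus).lt_of_ne ham
    have ham_alt : a m * (-1) ^ m ≤ 0 :=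
      taylor_coeff_nonpos (b := fun i => a i * (-1) ^ i) hδ hm1 hmk
        (fun i hi him => by rw [hlow i hi him, zero_mul]) hminus
    refine ⟨Nat.not_odd_iff_even.1 fun hodd => ?_, ham_neg⟩
    rw [hodd.neg_one_pow] at ham_alt
    linarith
  · have ht : δ / 2 ∈ Set.Ioo 0 δ := ⟨half_pos hδ, half_lt_self hδ⟩
    have hsum_zero : ∀ c : ℕ → ℝ, ∑ i ∈ Icc 1 (k - 1), a i * c i = 0 := fun c =>
      sum_eq_zero fun i hi => by rw [hall i (mem_Icc.1 hi).1 (mem_Icc.1 hi).2, zero_mul]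
    have hplus' := hplus (δ / 2) ht
    have hminus' := hminus (δ / 2) ht
    simp only [mul_div_assoc, mul_assoc, hsum_zero, zero_add] at hplus' hminus'
    have hmonomial_pos : 0 < (δ / 2) ^ k / (k.factorial : ℝ) := by positivity
    exact ⟨neg_of_mul_neg_left hplus' hmonomial_pos.le,
      neg_of_mul_neg_left (by linarith) hmonomial_pos.le⟩

/-- analytic core of the isolated-touch junction analysis. If both
one-sided Taylor-type expansions `f⁺` and `f⁻` are strictly negative on `(0, δ)`,
then the least index `m` with `a m ≠ 0` (if any) is even with `a m < 0`; and if all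
`a i` vanish then `u⁺ < 0` and `(-1)^k u⁻ < 0`. -/
theorem isolated_touch_taylor_sign_analysis
    (k : ℕ) (hk : 2 ≤ k) (a : ℕ → ℝ) (up um δ : ℝ) (hδ : 0 < δ)
    (hplus : ∀ t ∈ Set.Ioo (0:ℝ) δ,
      (∑ i ∈ Finset.Icc 1 (k - 1), a i * t ^ i / (Nat.factorial i : ℝ)) +
        up * t ^ k / (Nat.factorial k : ℝ) < 0)
    (hminus : ∀ t ∈ Set.Ioo (0:ℝ) δ,
      (∑ i ∈ Finset.Icc 1 (k - 1), a i * (-1 : ℝ) ^ i * t ^ i / (Nat.factorial i : ℝ)) +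
        um * (-1 : ℝ) ^ k * t ^ k / (Nat.factorial k : ℝ) < 0) :
    (∀ m, 1 ≤ m → m ≤ k - 1 → a m ≠ 0 → (∀ i, 1 ≤ i → i < m → a i = 0) →
      Even m ∧ a m < 0) ∧
    ((∀ i, 1 ≤ i → i ≤ k - 1 → a i = 0) → up < 0 ∧ (-1 : ℝ) ^ k * um < 0) :=
  isolated_touch_taylor_sign_analysis_general k a up um δ hδ hplus hminus
end

section
/- Let n ≥ 1, 1 ≤ k ≤ n, M > 0, σ ∈ {−1, 1}, δ > 0, and let u ∈ ℝ be a constant. Let x_1, …, x_n : [T, T + δ] → ℝ satisfy the chain-of-integrators dynamics with constant control u on [T, T + δ]. Suppose x_i(T) = 0 for all 1 ≤ i < k, x_k(T) = σM, and |x_k(t)| ≤ M for all t ∈ [T, T + δ]. Then σu ≤ 0. -/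
/-!
Integrating the chain upwards from `x 1`, the vanishing of the lower states at `T` gives the
explicit solution `x k (T + t) = σ M + u t ^ k / k!`. At `t = δ` the bound `σ x k ≤ |x k| ≤ M`
leaves `σ u δ ^ k / k! ≤ 0`.
-/

open Set

lemma eqOn_Icc_of_hasDerivAt {a b : ℝ} {f g d : ℝ → ℝ}
    (hf : ∀ t ∈ Icc a b, HasDerivAt f (d t) t) (hg : ∀ t ∈ Icc a b, HasDerivAt g (d t) t)
    (ha : f a = g a) : EqOn f g (Icc a b) :=
  eq_of_has_deriv_right_eq
    (fun t ht => (hf t (mem_Icc_of_Ico ht)).hasDerivWithinAt)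
    (fun t ht => (hg t (mem_Icc_of_Ico ht)).hasDerivWithinAt)
    (fun t ht => (hf t ht).continuousAt.continuousWithinAt)
    (fun t ht => (hg t ht).continuousAt.continuousWithinAt) ha

lemma hasDerivAt_sub_pow_succ_div_factorial (a t : ℝ) (j : ℕ) :
    HasDerivAt (fun s => (s - a) ^ (j + 1) / (j + 1).factorial) ((t - a) ^ j / j.factorial) t := by
  refine (((hasDerivAt_pow (j + 1) (t - a)).comp_sub_const t a).div_const _).congr_deriv ?_
  rw [Nat.factorial_succ, Nat.add_sub_cancel]
  push_cast
  field_simp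

lemma chain_eq_add_mul_pow_div_factorial {n j : ℕ} {a b u : ℝ} {x : ℕ → ℝ → ℝ}
    (hx1 : ∀ t ∈ Icc a b, HasDerivAt (x 1) u t)
    (hx : ∀ i, 1 ≤ i → i < n → ∀ t ∈ Icc a b, HasDerivAt (x (i + 1)) (x i t) t)
    (hj : 1 ≤ j) (hjn : j ≤ n) (hzero : ∀ i, 1 ≤ i → i < j → x i a = 0) :
    ∀ t ∈ Icc a b, x j t = x j a + u * ((t - a) ^ j / j.factorial) := by
  induction j, hj using Nat.le_induction with
  | base =>
    refine eqOn_Icc_of_hasDerivAt hx1 (fun t _ => ?_) (by simp)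
    simpa using ((hasDerivAt_id t).sub_const a).const_mul u |>.const_add (x 1 a)
  | succ j hj ih =>
    have hxj : ∀ t ∈ Icc a b, x j t = u * ((t - a) ^ j / j.factorial) := fun t ht => by
      rw [ih (by omega) (fun i hi hij => hzero i hi (by omega)) t ht, hzero j hj (by omega),
        zero_add]
    refine eqOn_Icc_of_hasDerivAt (hx j hj (by omega)) (fun t ht => ?_) (by simp)
    rw [hxj t ht]
    exact ((hasDerivAt_sub_pow_succ_div_factorial a t j).const_mul u).const_add _

lemma mul_nonpos_of_abs_mul_add_le {σ M v : ℝ} (hσ : |σ| = 1) (h : |σ * M + v| ≤ M) :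
    σ * v ≤ 0 := by
  have := calc M + σ * v = |σ| * |σ| * M + σ * v := by rw [hσ, one_mul, one_mul]
    _ = σ * (σ * M + v) := by rw [abs_mul_abs_self]; ring
    _ ≤ |σ * (σ * M + v)| := le_abs_self _
    _ = |σ * M + v| := by rw [abs_mul, hσ, one_mul]
  linarith

theorem sign_of_control_after_leaving_boundary_general
    (n k : ℕ) (hk1 : 1 ≤ k) (hkn : k ≤ n)
    (M : ℝ) (σ : ℝ) (hσ : σ = -1 ∨ σ = 1)
    (δ : ℝ) (hδ : 0 < δ) (u T : ℝ) (x : ℕ → ℝ → ℝ)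
    (hx1 : ∀ t ∈ Set.Icc T (T + δ), HasDerivAt (x 1) u t)
    (hxk : ∀ j, 1 ≤ j → j < n → ∀ t ∈ Set.Icc T (T + δ), HasDerivAt (x (j + 1)) (x j t) t)
    (hzero : ∀ i, 1 ≤ i → i < k → x i T = 0)
    (hstart : x k T = σ * M)
    (hbound : ∀ t ∈ Set.Icc T (T + δ), |x k t| ≤ M) :
    σ * u ≤ 0 := by
  have hend : T + δ ∈ Icc T (T + δ) := ⟨by linarith, le_rfl⟩
  have hend_bound := hbound _ hend
  rw [chain_eq_add_mul_pow_div_factorial hx1 hxk hk1 hkn hzero _ hend, hstart,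
    add_sub_cancel_left] at hend_bound
  have hσabs : |σ| = 1 := by rcases hσ with rfl | rfl <;> norm_num
  have hsign := mul_nonpos_of_abs_mul_add_le hσabs hend_bound
  rw [← mul_assoc] at hsign
  exact nonpos_of_mul_nonpos_left hsign (by positivity)

/-- forward-in-time sign argument. Immediately after the state
leaves the constraint boundary `x k = σ M` (with all lower states vanishing), a
constant control `u` keeping `|x k| ≤ M` must satisfy `σ u ≤ 0`. -/
theorem sign_of_control_after_leaving_boundary
    (n k : ℕ) (hn : 1 ≤ n) (hk1 : 1 ≤ k) (hkn : k ≤ n)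
    (M : ℝ) (hM : 0 < M) (σ : ℝ) (hσ : σ = -1 ∨ σ = 1)
    (δ : ℝ) (hδ : 0 < δ) (u T : ℝ) (x : ℕ → ℝ → ℝ)
    (hx1 : ∀ t ∈ Set.Icc T (T + δ), HasDerivAt (x 1) u t)
    (hxk : ∀ j, 1 ≤ j → j < n → ∀ t ∈ Set.Icc T (T + δ), HasDerivAt (x (j + 1)) (x j t) t)
    (hzero : ∀ i, 1 ≤ i → i < k → x i T = 0)
    (hstart : x k T = σ * M)
    (hbound : ∀ t ∈ Set.Icc T (T + δ), |x k t| ≤ M) :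
    σ * u ≤ 0 :=
  sign_of_control_after_leaving_boundary_general n k hk1 hkn M σ hσ δ hδ u T x hx1 hxk hzero hstart
    hbound
end
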